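/- Convexity of h'/h'': for the function h(x) = ((x+1)/2) ln((x+1)/2) - ((x-1)/2) ln((x-1)/2) defined for x > 1, the ratio φ(x) = h'(x)/h''(x) is strictly convex on (1,∞). -/

import Mathlib

/-! With `θ = arcoth x`, i.e. `x = coth θ`, one has `h' x = θ` and `h'' x = 1 / (1 - x²)`, so
`φ = h' / h'' = (1 - x²) θ`. Then `φ' = 1 - 2xθ` and `φ'' = 2x / (x² - 1) - 2θ = sinh 2θ - 2θ`,
which is positive since `θ > 0`. -/

open Real Set Filter Topology

/-- The entropy of a one-mode Gaussian state as a function of the symplectic eigenvalue: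
`h(x) = ((x+1)/2) log ((x+1)/2) - ((x-1)/2) log ((x-1)/2)`. -/
noncomputable def hfun (x : ℝ) : ℝ :=
  ((x + 1) / 2) * Real.log ((x + 1) / 2) - ((x - 1) / 2) * Real.log ((x - 1) / 2)

noncomputable def arcoth (x : ℝ) : ℝ := (log (x + 1) - log (x - 1)) / 2

lemma deriv_deriv_eq_of_eventually_hasDerivAt {f f' : ℝ → ℝ} {x f'' : ℝ}
    (hf : ∀ᶠ y in 𝓝 x, HasDerivAt f (f' y) y) (hf' : HasDerivAt f' f'' x) :
    deriv (deriv f) x = f'' := by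
  rw [EventuallyEq.deriv_eq (hf.mono fun y hy => hy.deriv), hf'.deriv]

lemma strictConvexOn_of_hasDerivAt2_pos {D : Set ℝ} (hopen : IsOpen D) (hconv : Convex ℝ D)
    {f f' f'' : ℝ → ℝ} (hf : ∀ x ∈ D, HasDerivAt f (f' x) x)
    (hf' : ∀ x ∈ D, HasDerivAt f' (f'' x) x) (hf'' : ∀ x ∈ D, 0 < f'' x) :
    StrictConvexOn ℝ D f := by
  have hmono : StrictMonoOn f' D :=
    strictMonoOn_of_deriv_pos hconv (fun x hx => (hf' x hx).continuousAt.continuousWithinAt)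
      fun x hx => by
        rw [(hf' x (interior_subset hx)).deriv]
        exact hf'' x (interior_subset hx)
  refine StrictMonoOn.strictConvexOn_of_deriv hconv
    (fun x hx => (hf x hx).continuousAt.continuousWithinAt) ?_
  rw [hopen.interior_eq]
  exact hmono.congr fun x hx => (hf x hx).deriv.symm

section arcoth

variable {x : ℝ}

lemma arcoth_pos (hx : 1 < x) : 0 < arcoth x := by
  unfold arcoth
  have := log_lt_log (by linarith) (show x - 1 < x + 1 by linarith)
  linarith

lemma sinh_two_mul_arcoth (hx : 1 < x) : sinh (2 * arcoth x) = 2 * x / (x ^ 2 - 1) := by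
  have hx₁ : 0 < x - 1 := by linarith
  have hx₂ : 0 < x + 1 := by linarith
  have hlog : 2 * arcoth x = log ((x + 1) / (x - 1)) := by
    rw [arcoth, log_div hx₂.ne' hx₁.ne']
    ring
  have hsq : x ^ 2 - 1 ≠ 0 := by nlinarith
  rw [hlog, sinh_log (by positivity)]
  field_simp
  ring

lemma two_mul_arcoth_lt (hx : 1 < x) : 2 * arcoth x < 2 * x / (x ^ 2 - 1) :=
  sinh_two_mul_arcoth hx ▸ self_lt_sinh_iff.mpr (by linarith [arcoth_pos hx])

lemma hasDerivAt_arcoth (hx : 1 < x) : HasDerivAt arcoth (1 - x ^ 2)⁻¹ x := by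
  have hx₁ : x - 1 ≠ 0 := by linarith
  have hx₂ : x + 1 ≠ 0 := by linarith
  have hsq : 1 - x ^ 2 ≠ 0 := by nlinarith
  refine HasDerivAt.congr_deriv (f := arcoth) ((((hasDerivAt_id' x).add_const 1).log hx₂).sub
    (((hasDerivAt_id' x).sub_const 1).log hx₁) |>.div_const 2) ?_
  field_simp
  ring

end arcoth

section hfun

variable {x : ℝ}

lemma hasDerivAt_hfun (hx : 1 < x) : HasDerivAt hfun (arcoth x) x := by
  have hx₁ : 0 < x - 1 := by linarith
  have hx₂ : 0 < x + 1 := by linarith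
  have hu : HasDerivAt (fun y : ℝ => (y + 1) / 2) (1 / 2) x :=
    ((hasDerivAt_id' x).add_const 1).div_const 2
  have hv : HasDerivAt (fun y : ℝ => (y - 1) / 2) (1 / 2) x :=
    ((hasDerivAt_id' x).sub_const 1).div_const 2
  refine HasDerivAt.congr_deriv (f := hfun)
    (((hasDerivAt_mul_log (by positivity)).comp x hu).sub
      ((hasDerivAt_mul_log (by positivity)).comp x hv)) ?_
  rw [arcoth, log_div hx₂.ne' two_ne_zero, log_div hx₁.ne' two_ne_zero]
  ring

lemma deriv_deriv_hfun (hx : 1 < x) : deriv (deriv hfun) x = (1 - x ^ 2)⁻¹ :=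
  deriv_deriv_eq_of_eventually_hasDerivAt
    (eventually_gt_nhds hx |>.mono fun _ hy => hasDerivAt_hfun hy) (hasDerivAt_arcoth hx)

lemma deriv_hfun_div_deriv_deriv_hfun (hx : 1 < x) :
    deriv hfun x / deriv (deriv hfun) x = (1 - x ^ 2) * arcoth x := by
  rw [(hasDerivAt_hfun hx).deriv, deriv_deriv_hfun hx, div_inv_eq_mul, mul_comm]

lemma hasDerivAt_one_sub_sq_mul_arcoth (hx : 1 < x) :
    HasDerivAt (fun y => (1 - y ^ 2) * arcoth y) (1 - 2 * x * arcoth x) x := by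
  have hsq : 1 - x ^ 2 ≠ 0 := by nlinarith
  refine HasDerivAt.congr_deriv
    (((hasDerivAt_pow 2 x).const_sub 1).mul (hasDerivAt_arcoth hx)) ?_
  field_simp
  ring

lemma hasDerivAt_one_sub_two_mul_mul_arcoth (hx : 1 < x) :
    HasDerivAt (fun y => 1 - 2 * y * arcoth y) (2 * x / (x ^ 2 - 1) - 2 * arcoth x) x := by
  have hsq : 1 - x ^ 2 ≠ 0 := by nlinarith
  refine HasDerivAt.congr_deriv
    ((((hasDerivAt_id' x).const_mul 2).mul (hasDerivAt_arcoth hx)).const_sub 1) ?_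
  rw [← neg_sub 1 (x ^ 2), div_neg]
  field_simp
  ring

end hfun

/-- The ratio `h'/h''` is strictly convex on `(1,∞)`. -/
theorem hderiv_ratio_strictConvexOn :
    StrictConvexOn ℝ (Set.Ioi 1) (fun x : ℝ => deriv hfun x / deriv (deriv hfun) x) := by
  have hφ : StrictConvexOn ℝ (Ioi 1) fun x => (1 - x ^ 2) * arcoth x :=
    strictConvexOn_of_hasDerivAt2_pos isOpen_Ioi (convex_Ioi 1)
      (fun _ hx => hasDerivAt_one_sub_sq_mul_arcoth hx)
      (fun _ hx => hasDerivAt_one_sub_two_mul_mul_arcoth hx)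
      (fun _ hx => sub_pos.2 (two_mul_arcoth_lt hx))
  exact hφ.congr fun _ hx => (deriv_hfun_div_deriv_deriv_hfun hx).symm
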